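/- arXiv:math/0503156 — 2 statements merged into one kernel-verified Lean document; each statement's English description precedes it below -/
import Mathlib

section
/- Let K be a number field with algebraic closure K̄, let E be an elliptic curve defined over K, and let σ ∈ Gal(K̄/K). If −1 is an eigenvalue of the action of σ on E(K̄) ⊗_ℤ ℂ, then there exists a point P ∈ E(K̄) of infinite order such that σ(P) = −P. -/
open WeierstrassCurve TensorProduct

noncomputable section

attribute [local instance] Classical.propDecidable

/-- The absolute Galois group `Gal(K̄/K)` of a field `K`, where `K̄` is a fixed
algebraic closure of `K`.  It carries the Krull topology from Mathlib. -/
abbrev AbsGal (K : Type*) [Field K] : Type _ :=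
  AlgebraicClosure K ≃ₐ[K] AlgebraicClosure K

/-- The group `E(K̄)` of points of a (Weierstrass model of an) elliptic curve `E` over
the algebraic closure of `K`. -/
abbrev EPoints (K : Type*) [Field K] (E : WeierstrassCurve K) : Type _ :=
  (E.baseChange (AlgebraicClosure K)).toAffine.Point

/-- The coordinatewise action of a Galois element `σ ∈ Gal(K̄/K)` on `E(K̄)`,
as a homomorphism of abelian groups. -/
noncomputable def galPoint {K : Type*} [Field K] (E : WeierstrassCurve K) (σ : AbsGal K) :
    EPoints K E →+ EPoints K E :=
  Affine.Point.map (W' := E.toAffine) σ.toAlgHom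

/-- The complex vector space `V_E := E(K̄) ⊗_ℤ ℂ`. -/
abbrev VE (K : Type*) [Field K] (E : WeierstrassCurve K) : Type _ :=
  ℂ ⊗[ℤ] EPoints K E

/-- The ℂ-linear action of a Galois element `σ ∈ Gal(K̄/K)` on `V_E = E(K̄) ⊗_ℤ ℂ`,
obtained by extending the coordinatewise action on points ℂ-linearly. -/
noncomputable def galAct {K : Type*} [Field K] (E : WeierstrassCurve K) (σ : AbsGal K) :
    Module.End ℂ (VE K E) :=
  LinearMap.baseChange ℂ (galPoint E σ).toIntLinearMap

/-- Any element of `ℂ ⊗[ℤ] A` vanishes when `A` is a torsion abelian group. -/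
lemma tensor_torsion_eq_zero {A : Type*} [AddCommGroup A]
    (hA : ∀ a : A, IsOfFinAddOrder a) (x : ℂ ⊗[ℤ] A) : x = 0 := by
  induction x with
  | zero => rfl
  | tmul c a =>
      obtain ⟨n, hn, hna⟩ := (isOfFinAddOrder_iff_nsmul_eq_zero).mp (hA a)
      have hc : c = (n : ℤ) • ((n : ℂ)⁻¹ * c) := by
        have hn0 : (n : ℂ) ≠ 0 := Nat.cast_ne_zero.mpr hn.ne'
        rw [zsmul_eq_mul]
        push_cast
        field_simp
      have hza : (n : ℤ) • a = 0 := by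
        rw [natCast_zsmul]; exact hna
      rw [hc, TensorProduct.smul_tmul, hza, TensorProduct.tmul_zero]
  | add x y hx hy => rw [hx, hy, add_zero]

/-- If `−1` is an eigenvalue of the action of `σ ∈ Gal(K̄/K)` on `E(K̄) ⊗_ℤ ℂ`, then there
exists a point `P ∈ E(K̄)` of infinite order with `σ(P) = −P`. -/
theorem exists_infinite_order_point_neg_fixed_of_hasEigenvalue_minusOne
    (K : Type*) [Field K] [NumberField K]
    (E : WeierstrassCurve K) [E.IsElliptic] (σ : AbsGal K)
    (h : Module.End.HasEigenvalue (galAct E σ) (-1 : ℂ)) :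
    ∃ P : EPoints K E, ¬ IsOfFinAddOrder P ∧ galPoint E σ P = -P := by
  classical
  obtain ⟨v, hv⟩ := h.exists_hasEigenvector
  by_contra hcon
  push_neg at hcon
  set M := EPoints K E
  set g : M →ₗ[ℤ] M := (galPoint E σ).toIntLinearMap + LinearMap.id with hg
  -- every element of the kernel of `g` has finite order
  have hker : ∀ a : LinearMap.ker g, IsOfFinAddOrder a := by
    rintro ⟨P, hP⟩
    have hP' : galPoint E σ P + P = 0 := hP
    by_contra hfin
    have hfinP : ¬ IsOfFinAddOrder P := by
      intro hPfin
      exact hfin ((isOfFinAddOrder_iff_nsmul_eq_zero).mpr <| by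
        obtain ⟨n, hn, hnP⟩ := (isOfFinAddOrder_iff_nsmul_eq_zero).mp hPfin
        exact ⟨n, hn, Subtype.ext <| by simpa using hnP⟩)
    exact hcon P hfinP (by rw [eq_neg_iff_add_eq_zero]; exact hP')
  -- flatness of ℂ over ℤ
  haveI : Module.Flat ℤ ℚ := IsLocalization.flat ℚ (nonZeroDivisors ℤ)
  haveI : Module.Flat ℤ ℂ := Module.Flat.trans ℤ ℚ ℂ
  -- v is in the kernel of `lTensor ℂ g`
  have hv0 : LinearMap.lTensor ℂ g v = 0 := by
    have h1 : LinearMap.lTensor ℂ g v =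
        galAct E σ v + v := by
      have : g = (galPoint E σ).toIntLinearMap + LinearMap.id := hg
      rw [this, LinearMap.lTensor_add, LinearMap.lTensor_id]
      have h2 : (LinearMap.lTensor ℂ (galPoint E σ).toIntLinearMap) v = galAct E σ v := by
        rw [galAct, ← LinearMap.baseChange_eq_ltensor]
      simp [h2]
    rw [h1, hv.apply_eq_smul, neg_one_smul, neg_add_cancel]
  -- by flatness, v comes from ℂ ⊗ ker g
  have hexact := Module.Flat.lTensor_exact ℂ g.exact_subtype_ker_map
  obtain ⟨w, hw⟩ := (hexact v).mp hv0
  rw [tensor_torsion_eq_zero hker w, map_zero] at hw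
  exact hv.right hw.symm

end
end

section
/- Let n ≥ 3 be an integer, let ζ ∈ ℂ be a primitive n-th root of unity, and let λ ∈ ℂ with λ ≠ 0 and λ ≠ 1. Then there exist a, b ∈ ℂ such that (ζa − a)(ζb − b) = λ·(ζb − a)(ζa − b), the four numbers a, ζa, b, ζb are such that b ∉ {a, ζa} and ζb ∉ {a, ζa}, and (ζb − a)(ζa − b) ≠ 0; i.e., the cross-ratio of the ordered quadruple (a, b, ζa, ζb) equals λ. -/
/-- For `n ≥ 3`, a primitive `n`-th root of unity `ζ`, and `λ ∈ ℂ \ {0, 1}`, there exist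
`a, b ∈ ℂ` such that the cross-ratio of the ordered quadruple `(a, b, ζa, ζb)` equals `λ`:
`(ζa − a)(ζb − b) = λ·(ζb − a)(ζa − b)` with `b ∉ {a, ζa}`, `ζb ∉ {a, ζa}` and
`(ζb − a)(ζa − b) ≠ 0`. -/
theorem exists_cross_ratio_quadruple
    (n : ℕ) (hn : 3 ≤ n) (ζ : ℂ) (hζ : IsPrimitiveRoot ζ n)
    (lam : ℂ) (hlam0 : lam ≠ 0) (hlam1 : lam ≠ 1) :
    ∃ a b : ℂ,
      (ζ * a - a) * (ζ * b - b) = lam * ((ζ * b - a) * (ζ * a - b)) ∧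
      b ≠ a ∧ b ≠ ζ * a ∧ ζ * b ≠ a ∧ ζ * b ≠ ζ * a ∧
      (ζ * b - a) * (ζ * a - b) ≠ 0 := by
  have hζ0 : ζ ≠ 0 := hζ.ne_zero (by omega)
  have hζ1 : ζ ≠ 1 := hζ.ne_one (by omega)
  have hζ1' : ζ - 1 ≠ 0 := sub_ne_zero.mpr hζ1
  set c : ℂ := (ζ - 1) ^ 2 - lam * (ζ ^ 2 + 1) with hc
  obtain ⟨s, hs⟩ : ∃ s : ℂ, s ^ 2 = c ^ 2 - 4 * lam ^ 2 * ζ ^ 2 :=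
    IsAlgClosed.exists_pow_nat_eq _ (by norm_num)
  set b : ℂ := (s - c) / (2 * lam * ζ) with hb
  have h2 : (2 * lam * ζ : ℂ) ≠ 0 := by simp [hlam0, hζ0]
  have hb' : 2 * lam * ζ * b = s - c := by
    rw [hb]; field_simp
  have h4 : (4 * lam * ζ) * (lam * ζ * b ^ 2 + c * b + lam * ζ) = 0 := by
    linear_combination (2 * lam * ζ * b + s + c) * hb' + hs
  have hquad : lam * ζ * b ^ 2 + c * b + lam * ζ = 0 := by
    rcases mul_eq_zero.mp h4 with h | h
    · exact absurd h (by simp [hlam0, hζ0])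
    · exact h
  have hb1 : b ≠ 1 := by
    intro h
    rw [h] at hquad
    have h1 : (lam - 1) * (ζ - 1) ^ 2 = 0 := by linear_combination -hquad
    rcases mul_eq_zero.mp h1 with h' | h'
    · exact hlam1 (sub_eq_zero.mp h')
    · exact pow_ne_zero 2 hζ1' h'
  have hbζ : b ≠ ζ := by
    intro h
    rw [h] at hquad
    have : ζ * (ζ - 1) ^ 2 = 0 := by linear_combination hquad
    rcases mul_eq_zero.mp this with h' | h'
    · exact hζ0 h'
    · exact pow_ne_zero 2 hζ1' h'
  have hζb1 : ζ * b ≠ 1 := by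
    intro h
    have h' : ζ * b - 1 = 0 := sub_eq_zero.mpr h
    have : (ζ - 1) ^ 2 = 0 := by
      linear_combination ζ * hquad - (lam * (ζ * b + 1) + c) * h'
    exact pow_ne_zero 2 hζ1' this
  refine ⟨1, b, ?_, ?_, by simpa using hbζ, by simpa using hζb1, ?_, ?_⟩
  · linear_combination hquad
  · simpa using hb1
  · intro h
    exact hb1 (mul_left_cancel₀ hζ0 (by simpa using h))
  · simp only [mul_one]
    exact mul_ne_zero (sub_ne_zero.mpr hζb1) (sub_ne_zero.mpr (fun h => hbζ h.symm))
end
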